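/- arXiv:math/0306092 — 8 statements merged into one kernel-verified Lean document; each statement's English description precedes it below -/
import Mathlib

section
/- For integers n ≥ 1 and 1 ≤ m ≤ n, let A be the n×n matrix whose (k,j)-entry is j^{2k-1} (k, j = 1, …, n), and let A_m be the matrix obtained from A by replacing its m-th column with the first standard basis vector e₁ (entry 1 in row 1, zeros elsewhere). Then det A_m = (−1)^{m+1} (n!/m)³ ∏_{1 ≤ i < j ≤ n, i ≠ m, j ≠ m} (j² − i²). -/
/-!
Only the first entry of the replaced column is nonzero, so expanding along it (via the adjugate)
gives `det A_m = ± det M`, where `M` is `A` without its first row and `m`-th column. The entries of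
`M` are `x_j ^ (2k + 1) = x_j ^ 3 * (x_j ^ 2) ^ (k - 1)` (`k = 1, …, n - 1`) with `x_j` running
over `{1, …, n} \ {m}`, so `M` is a Vandermonde matrix in the `x_j ^ 2` with its columns scaled
by `x_j ^ 3`. Hence `det M = (∏ x_j) ^ 3 * ∏_{i < j} (x_j ^ 2 - x_i ^ 2)`, and `∏ x_j = n! / m`.
-/

open Finset

namespace Matrix

theorem det_updateCol_single_zero {R : Type*} [CommRing R] {N : ℕ}
    (A : Matrix (Fin (N + 1)) (Fin (N + 1)) R) (m : Fin (N + 1)) :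
    (A.updateCol m (Pi.single 0 1)).det =
      (-1) ^ (m : ℕ) * (A.submatrix Fin.succ m.succAbove).det := by
  rw [← cramer_apply, cramer_eq_adjugate_mulVec, mulVec_single_one, col_apply,
    adjugate_fin_succ_eq_det_submatrix, Fin.val_zero, zero_add, Fin.succAbove_zero]

theorem det_of_mul_pow {R : Type*} [CommRing R] {N : ℕ} (v w : Fin N → R) :
    (of fun k j : Fin N => v j * w j ^ (k : ℕ)).det =
      (∏ j, v j) * ∏ i, ∏ j ∈ Ioi i, (w j - w i) := by
  rw [← det_vandermonde, ← det_transpose (vandermonde w), ← det_mul_row]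
  rfl

end Matrix

namespace Fin

variable {M : Type*} [CommMonoid M] {N : ℕ}

theorem prod_filter_range_ne_eq_prod_succAbove (m : Fin (N + 1)) (g : ℕ → M) :
    ∏ i ∈ (range (N + 1)).filter (· ≠ (m : ℕ)), g i = ∏ i : Fin N, g (m.succAbove i) := by
  rw [prod_filter, ← prod_univ_eq_prod_range (fun i => if i ≠ (m : ℕ) then g i else 1),
    prod_univ_succAbove _ m]
  simp [Fin.val_ne_of_ne (succAbove_ne m _)]

theorem prod_filter_range_succAbove_ne_eq_prod_Iio (m : Fin (N + 1)) (j : Fin N) (g : ℕ → M) :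
    ∏ i ∈ (range (m.succAbove j)).filter (· ≠ (m : ℕ)), g i =
      ∏ i ∈ Iio j, g (m.succAbove i) := by
  have hrange : range (m.succAbove j) = (range (N + 1)).filter (· < (m.succAbove j : ℕ)) := by
    ext i
    simp only [mem_range, mem_filter]
    omega
  rw [hrange, filter_comm, prod_filter, prod_filter_range_ne_eq_prod_succAbove, ← prod_filter,
    ← filter_gt_eq_Iio]
  simp only [Fin.val_fin_lt, succAbove_lt_succAbove_iff]

theorem prod_succAbove_add_one (m : Fin (N + 1)) :
    (m + 1) * ∏ i : Fin N, ((m.succAbove i : ℕ) + 1) = (N + 1).factorial := by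
  rw [← prod_univ_succAbove (fun i : Fin (N + 1) => (i : ℕ) + 1) m,
    prod_univ_eq_prod_range (· + 1), ← Nat.factorial_eq_prod_range_add_one]

end Fin

open Matrix

theorem det_cramer_numerator_general (n : ℕ) (m : Fin n) :
    Matrix.det
      (Matrix.updateCol
        (fun k j : Fin n => ((j.1 + 1 : ℝ)) ^ (2 * (k.1 + 1) - 1))
        m
        (fun k : Fin n => if k.1 = 0 then (1 : ℝ) else 0)) =
      (-1 : ℝ) ^ (m.1 + 1 + 1) * ((n.factorial : ℝ) / (m.1 + 1 : ℝ)) ^ 3 *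
        ∏ j ∈ (Finset.range n).filter (fun j => j ≠ m.1),
          ∏ i ∈ (Finset.range j).filter (fun i => i ≠ m.1),
            (((j + 1 : ℝ)) ^ 2 - ((i + 1 : ℝ)) ^ 2) := by
  obtain ⟨N, rfl⟩ : ∃ N, n = N + 1 := ⟨n - 1, by have := m.2; omega⟩
  set x : Fin N → ℝ := fun j => ((m.succAbove j : ℕ) : ℝ) + 1
  have he₁ : (fun k : Fin (N + 1) => if k.1 = 0 then (1 : ℝ) else 0) = Pi.single 0 1 := by
    ext k
    cases k using Fin.cases <;> simp
  have hprod : ∏ j, x j = (N + 1).factorial / (m + 1 : ℝ) := by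
    rw [eq_div_iff (by positivity), mul_comm, ← Fin.prod_succAbove_add_one m]
    push_cast
    rfl
  have hvdm : ∏ i, ∏ j ∈ Ioi i, (x j ^ 2 - x i ^ 2) =
      ∏ j ∈ (range (N + 1)).filter (· ≠ (m : ℕ)),
        ∏ i ∈ (range j).filter (· ≠ (m : ℕ)), (((j + 1 : ℝ)) ^ 2 - ((i + 1 : ℝ)) ^ 2) := by
    rw [prod_comm' (t' := univ) (s' := Iio) (by simp), Fin.prod_filter_range_ne_eq_prod_succAbove]
    exact prod_congr rfl fun j _ => by rw [Fin.prod_filter_range_succAbove_ne_eq_prod_Iio]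
  calc _ = (-1) ^ (m : ℕ) * det (of fun k j : Fin N => x j ^ 3 * (x j ^ 2) ^ (k : ℕ)) := by
        rw [he₁]
        refine (det_updateCol_single_zero _ m).trans ?_
        congr 2
        ext k j
        show (((m.succAbove j : ℕ) : ℝ) + 1) ^ (2 * ((k : ℕ) + 1 + 1) - 1) =
          x j ^ 3 * (x j ^ 2) ^ (k : ℕ)
        rw [← pow_mul, ← pow_add, show 2 * ((k : ℕ) + 1 + 1) - 1 = 3 + 2 * k by omega]
    _ = _ := by
        rw [det_of_mul_pow, prod_pow, hprod, hvdm]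
        ring

/-- For integers `n ≥ 1` and `1 ≤ m ≤ n`, let `A` be the `n × n` matrix with
`(k, j)`-entry `j ^ (2k - 1)` (`k, j = 1, …, n`), and let `A_m` be `A` with its `m`-th
column replaced by the first standard basis vector `e₁`.  Then
`det A_m = (-1)^(m+1) * (n!/m)³ * ∏_{1 ≤ i < j ≤ n, i ≠ m, j ≠ m} (j² - i²)`. -/
theorem det_cramer_numerator (n : ℕ) (hn : 1 ≤ n) (m : Fin n) :
    Matrix.det
      (Matrix.updateCol
        (fun k j : Fin n => ((j.1 + 1 : ℝ)) ^ (2 * (k.1 + 1) - 1))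
        m
        (fun k : Fin n => if k.1 = 0 then (1 : ℝ) else 0)) =
      (-1 : ℝ) ^ (m.1 + 1 + 1) * ((n.factorial : ℝ) / (m.1 + 1 : ℝ)) ^ 3 *
        ∏ j ∈ (Finset.range n).filter (fun j => j ≠ m.1),
          ∏ i ∈ (Finset.range j).filter (fun i => i ≠ m.1),
            (((j + 1 : ℝ)) ^ 2 - ((i + 1 : ℝ)) ^ 2) :=
  det_cramer_numerator_general n m
end

section
/- For every integer n ≥ 1 and every integer k with 0 ≤ k ≤ n−1, one has ∑_{m=1}^{n} α_m^{(1)}(n) · m^{2k+1} = δ_{0k}, where δ_{0k} is the Kronecker delta (equal to 1 if k = 0 and 0 otherwise). -/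
open Finset

/-- `π_m(n) = ∏_{k=1, k ≠ m}^{n} (1 - m²/k²)`. -/
noncomputable def pim (n m : ℕ) : ℝ :=
  ∏ k ∈ (Finset.Icc 1 n).erase m, (1 - (m : ℝ) ^ 2 / (k : ℝ) ^ 2)

/-- `α_m^{(1)}(n) = 1 / (m · π_m(n))`. -/
noncomputable def alpha1 (n m : ℕ) : ℝ := 1 / ((m : ℝ) * pim n m)

open Polynomial

/-!
Lagrange interpolation of `X ^ k` (degree `k < n`) at the `n` nodes `1², …, n²`, evaluated at `0`,
gives `0 ^ k = ∑ m, m ^ (2k) · L_m(0)`, and the Lagrange basis polynomial `L_m` takes the value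
`∏_{j ≠ m} j² / (j² - m²) = 1 / π_m(n)` at `0`.
-/

namespace Lagrange

variable {F ι : Type*} [Field F] [DecidableEq ι] {s : Finset ι} {v : ι → F}

theorem eval_zero_basis {i : ι} (hv : ∀ j ∈ s.erase i, v j ≠ 0) :
    (Lagrange.basis s v i).eval 0 = (∏ j ∈ s.erase i, (1 - v i / v j))⁻¹ := by
  rw [Lagrange.basis, eval_prod, ← prod_inv_distrib]
  refine prod_congr rfl fun j hj => ?_
  rw [basisDivisor, eval_mul, eval_C, eval_sub, eval_X, eval_C, one_sub_div (hv j hj), inv_div,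
    ← neg_sub, inv_neg, zero_sub, neg_mul_neg, div_eq_inv_mul]

theorem eval_zero_eq_sum_div_prod {p : F[X]} (hvs : Set.InjOn v s) (hv : ∀ j ∈ s, v j ≠ 0)
    (hp : p.degree < #s) :
    p.eval 0 = ∑ i ∈ s, p.eval (v i) / ∏ j ∈ s.erase i, (1 - v i / v j) := by
  conv_lhs => rw [eq_interpolate hvs hp, interpolate_apply, eval_finsetSum]
  refine sum_congr rfl fun i _ => ?_
  rw [eval_mul, eval_C, eval_zero_basis fun j hj => hv j (mem_of_mem_erase hj), div_eq_mul_inv]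

end Lagrange

theorem alpha1_mul_pow (n m k : ℕ) (hm : m ≠ 0) :
    alpha1 n m * (m : ℝ) ^ (2 * k + 1) = ((m : ℝ) ^ 2) ^ k / pim n m := by
  have hm' : (m : ℝ) ≠ 0 := Nat.cast_ne_zero.mpr hm
  rw [alpha1, pow_succ, pow_mul]
  field_simp

/-- for every `n ≥ 1` and every `0 ≤ k ≤ n - 1`,
`∑_{m=1}^{n} α_m^{(1)}(n) m^(2k+1) = δ_{0k}`. -/
theorem alpha1_orthogonality (n : ℕ) (hn : 1 ≤ n) (k : ℕ) (hk : k ≤ n - 1) :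
    ∑ m ∈ Finset.Icc 1 n, alpha1 n m * (m : ℝ) ^ (2 * k + 1) =
      if k = 0 then 1 else 0 := by
  have hinj : Set.InjOn (fun m : ℕ => (m : ℝ) ^ 2) (Icc 1 n) := fun a _ b _ h => by
    simpa using h
  have hne : ∀ j ∈ Icc 1 n, (j : ℝ) ^ 2 ≠ 0 := fun j hj =>
    pow_ne_zero 2 (Nat.cast_ne_zero.mpr (by grind))
  have hdeg : (X ^ k : ℝ[X]).degree < #(Icc 1 n) := by
    rw [degree_X_pow, Nat.card_Icc]
    exact_mod_cast (show k < n + 1 - 1 by omega)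
  have interpolation := Lagrange.eval_zero_eq_sum_div_prod hinj hne hdeg
  simp only [eval_pow, eval_X] at interpolation
  rw [← zero_pow_eq, interpolation]
  exact sum_congr rfl fun m hm => alpha1_mul_pow n m k (by grind)
end

section
/- For every integer n ≥ 1 and every integer k with 0 ≤ k ≤ n−1, one has ∑_{m=1}^{n} α_m^{(2n-1)}(n) · m^{2k+1} = δ_{n-1,k}, where α_m^{(2n-1)}(n) = (−1)^{n+1} m / ((n!)² · π_m(n)) and δ_{n-1,k} is the Kronecker delta. -/
open Finset

/-- `α_m^{(2n-1)}(n) = (-1)^(n+1) m / ((n!)² π_m(n))`. -/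
noncomputable def alphaTop (n m : ℕ) : ℝ :=
  (-1 : ℝ) ^ (n + 1) * (m : ℝ) / (((n.factorial : ℝ)) ^ 2 * pim n m)

/-!
Since `(n!)² π_m(n) = ± m² ∏_{j ≠ m} (m² - j²)`, each term `α_m m^{2k+1}` equals
`(m²)^k / ∏_{j ≠ m} (m² - j²)`. The sum is therefore the top divided difference of `x ↦ x^k`
at the nodes `1², …, n²`, i.e. the coefficient of `x^{n-1}` in its Lagrange interpolant; for
`k < n` that interpolant is `x^k` itself.
-/

open Polynomial in
theorem Lagrange.sum_pow_div_prod_sub {F ι : Type*} [Field F] [DecidableEq ι] {s : Finset ι}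
    {v : ι → F} (hvs : Set.InjOn v s) {k : ℕ} (hk : k < #s) :
    ∑ i ∈ s, v i ^ k / ∏ j ∈ s.erase i, (v i - v j) = if k = #s - 1 then 1 else 0 := by
  have hdeg : ((X : F[X]) ^ k).degree < #s := by rw [degree_X_pow]; exact_mod_cast hk
  simpa [coeff_X_pow, eq_comm] using (Lagrange.coeff_eq_sum hvs hdeg).symm

theorem Nat.cast_factorial_eq_prod_Icc {R : Type*} [CommSemiring R] (n : ℕ) :
    (n.factorial : R) = ∏ j ∈ Icc 1 n, (j : R) := by
  rw [← Ico_add_one_right_eq_Icc, ← prod_Ico_id_eq_factorial, Nat.cast_prod]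

lemma factorial_sq_mul_pim {n m : ℕ} (hm : m ∈ Icc 1 n) :
    (n.factorial : ℝ) ^ 2 * pim n m =
      (m : ℝ) ^ 2 * ∏ j ∈ (Icc 1 n).erase m, ((j : ℝ) ^ 2 - (m : ℝ) ^ 2) := by
  rw [Nat.cast_factorial_eq_prod_Icc, ← prod_pow, ← mul_prod_erase _ _ hm, mul_assoc, pim,
    ← prod_mul_distrib]
  congr 1
  refine prod_congr rfl fun j hj => ?_
  have : (j : ℝ) ≠ 0 := by
    have := (mem_Icc.mp (mem_of_mem_erase hj)).1
    positivity
  field_simp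

lemma alphaTop_eq_inv {n m : ℕ} (hm : m ∈ Icc 1 n) :
    alphaTop n m = ((m : ℝ) * ∏ j ∈ (Icc 1 n).erase m, ((m : ℝ) ^ 2 - (j : ℝ) ^ 2))⁻¹ := by
  obtain ⟨hm1, hmn⟩ := mem_Icc.mp hm
  have hflip : ∏ j ∈ (Icc 1 n).erase m, ((j : ℝ) ^ 2 - (m : ℝ) ^ 2) =
      (-1) ^ (n + 1) * ∏ j ∈ (Icc 1 n).erase m, ((m : ℝ) ^ 2 - (j : ℝ) ^ 2) := by
    simp_rw [← neg_sub ((m : ℝ) ^ 2), prod_neg, card_erase_of_mem hm, Nat.card_Icc]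
    conv_rhs => rw [show n + 1 = n + 1 - 1 - 1 + 2 by omega, pow_add, neg_one_sq, mul_one]
  have hm0 : (m : ℝ) ≠ 0 := by positivity
  rw [alphaTop, factorial_sq_mul_pim hm, hflip]
  field_simp

/-- for every `n ≥ 1` and every `0 ≤ k ≤ n - 1`,
`∑_{m=1}^{n} α_m^{(2n-1)}(n) m^(2k+1) = δ_{n-1,k}`. -/
theorem alphaTop_orthogonality (n : ℕ) (hn : 1 ≤ n) (k : ℕ) (hk : k ≤ n - 1) :
    ∑ m ∈ Finset.Icc 1 n, alphaTop n m * (m : ℝ) ^ (2 * k + 1) =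
      if k = n - 1 then 1 else 0 := by
  have hsq : Set.InjOn (fun j : ℕ => (j : ℝ) ^ 2) (Icc 1 n) := fun a _ b _ hab => by
    simpa using hab
  have hcard : #(Icc 1 n) = n := by simp
  have key := Lagrange.sum_pow_div_prod_sub hsq (k := k) (by omega)
  rw [hcard] at key
  rw [← key]
  refine sum_congr rfl fun m hm => ?_
  have hm0 : (m : ℝ) ≠ 0 := by have := (mem_Icc.mp hm).1; positivity
  rw [alphaTop_eq_inv hm]
  field_simp
  ring
end

section
/- Let n ≥ 1 be an integer, h ≠ 0 a real number, and P a real polynomial of degree at most 2n. Then P′(0) = (1/(2h)) ∑_{m=1}^{n} α_m^{(1)}(n) · (P(mh) − P(−mh)). -/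
open Finset Polynomial

/-! Both sides are linear in `P`, so it suffices to check the monomials `X ^ j` with `j ≤ 2n`.
For even `j` the central differences vanish; for `j = 2r + 1` the right-hand side is
`h ^ (2r) ∑ₘ m ^ (2r) / π_m(n)`. Since `1 / π_m(n) = ∏_{k ≠ m} k² / (k² - m²)` is the value at `0`
of the Lagrange basis polynomial for the nodes `1², …, n²`, this sum is the interpolant of `x ^ r`
(of degree `r < n`) at these nodes, evaluated at `0`: it equals `0 ^ r`. -/

theorem Polynomial.lhom_apply_eq_of_X_pow {R M : Type*} [CommSemiring R] [AddCommMonoid M]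
    [Module R M] (f g : R[X] →ₗ[R] M) {N : ℕ} {p : R[X]} (hp : p.natDegree < N)
    (hfg : ∀ j < N, f (X ^ j) = g (X ^ j)) : f p = g p := by
  rw [p.as_sum_range' N hp]
  simp only [map_sum, ← smul_X_eq_monomial, map_smul]
  exact sum_congr rfl fun j hj => by rw [hfg j (mem_range.mp hj)]

theorem Polynomial.eval_zero_derivative_X_pow {R : Type*} [CommSemiring R] (j : ℕ) :
    (derivative (X ^ j : R[X])).eval 0 = if j = 1 then 1 else 0 := by
  rcases j with _ | _ | j <;> simp

theorem Lagrange.eval_eq_sum_eval_mul_eval_basis {F ι : Type*} [Field F] [DecidableEq ι]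
    {s : Finset ι} {v : ι → F} (hvs : Set.InjOn v s) {f : F[X]} (hf : f.degree < #s) (x : F) :
    f.eval x = ∑ i ∈ s, f.eval (v i) * (Lagrange.basis s v i).eval x := by
  conv_lhs => rw [Lagrange.eq_interpolate hvs hf]
  simp [eval_finsetSum]

theorem Lagrange.eval_zero_basisDivisor {F : Type*} [Field F] {x y : F} (hy : y ≠ 0) :
    (basisDivisor x y).eval 0 = (1 - x / y)⁻¹ := by
  simp only [basisDivisor, eval_mul, eval_C, eval_sub, eval_X, zero_sub]
  rw [one_sub_div hy, inv_div, ← neg_sub, inv_neg]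
  ring

theorem eval_zero_basis_sq_eq_inv_pim (n m : ℕ) :
    (Lagrange.basis (Icc 1 n) (fun k : ℕ => (k : ℝ) ^ 2) m).eval 0 = (pim n m)⁻¹ := by
  rw [Lagrange.basis, eval_prod, pim, ← prod_inv_distrib]
  refine prod_congr rfl fun k hk => Lagrange.eval_zero_basisDivisor ?_
  have : k ≠ 0 := by grind
  positivity

theorem sum_pow_sq_div_pim {n r : ℕ} (hr : r < n) :
    ∑ m ∈ Icc 1 n, (m : ℝ) ^ (2 * r) / pim n m = 0 ^ r := by
  have hinj : Set.InjOn (fun k : ℕ => (k : ℝ) ^ 2) (Icc 1 n) := fun a _ b _ hab => by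
    simpa using hab
  have hdeg : ((X : ℝ[X]) ^ r).degree < #(Icc 1 n) := by simp [hr]
  simpa [eval_zero_basis_sq_eq_inv_pim, pow_mul, div_eq_mul_inv] using
    (Lagrange.eval_eq_sum_eval_mul_eval_basis hinj hdeg 0).symm

noncomputable def centralDiff (n : ℕ) (h : ℝ) : ℝ[X] →ₗ[ℝ] ℝ :=
  (1 / (2 * h)) • ∑ m ∈ Icc 1 n, alpha1 n m • (leval ((m : ℝ) * h) - leval (-((m : ℝ) * h)))

theorem centralDiff_apply (n : ℕ) (h : ℝ) (P : ℝ[X]) :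
    centralDiff n h P = (1 / (2 * h)) *
      ∑ m ∈ Icc 1 n, alpha1 n m * (P.eval ((m : ℝ) * h) - P.eval (-((m : ℝ) * h))) := by
  simp [centralDiff]

theorem alpha1_mul_pow_succ (n : ℕ) {m : ℕ} (hm : m ≠ 0) (k : ℕ) :
    alpha1 n m * (m : ℝ) ^ (k + 1) = (m : ℝ) ^ k / pim n m := by
  have : (m : ℝ) ≠ 0 := by exact_mod_cast hm
  rw [alpha1, pow_succ]
  field_simp

theorem centralDiff_X_pow {n : ℕ} {h : ℝ} (hh : h ≠ 0) {j : ℕ} (hj : j ≤ 2 * n) :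
    centralDiff n h (X ^ j) = if j = 1 then 1 else 0 := by
  rw [centralDiff_apply]
  obtain ⟨r, rfl | rfl⟩ := Nat.even_or_odd' j
  · simp [Even.neg_pow (even_two_mul r)]
  · calc (1 / (2 * h)) * ∑ m ∈ Icc 1 n, alpha1 n m *
          (eval ((m : ℝ) * h) (X ^ (2 * r + 1)) - eval (-((m : ℝ) * h)) (X ^ (2 * r + 1)))
        = h ^ (2 * r) * ∑ m ∈ Icc 1 n, (m : ℝ) ^ (2 * r) / pim n m := by
          rw [mul_sum, mul_sum]
          refine sum_congr rfl fun m hm => ?_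
          rw [eval_X_pow, eval_X_pow, Odd.neg_pow ⟨r, rfl⟩, mul_pow,
            ← alpha1_mul_pow_succ n (by grind)]
          field_simp
          ring
      _ = if 2 * r + 1 = 1 then 1 else 0 := by
          rw [sum_pow_sq_div_pim (by omega)]
          rcases r with _ | r <;> simp

theorem central_diff_first_deriv_exact_general (n : ℕ) (h : ℝ) (hh : h ≠ 0)
    (P : Polynomial ℝ) (hP : P.degree ≤ 2 * n) :
    (Polynomial.derivative P).eval 0 =
      (1 / (2 * h)) *
        ∑ m ∈ Finset.Icc 1 n, alpha1 n m * (P.eval ((m : ℝ) * h) - P.eval (-((m : ℝ) * h))) := by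
  have hdeg : P.natDegree < 2 * n + 1 :=
    Nat.lt_succ_of_le (natDegree_le_iff_degree_le.mpr (by exact_mod_cast hP))
  rw [← centralDiff_apply]
  refine lhom_apply_eq_of_X_pow ((leval 0).comp derivative) (centralDiff n h) hdeg fun j hj => ?_
  rw [centralDiff_X_pow hh (by omega)]
  exact eval_zero_derivative_X_pow j

/-- for every `n ≥ 1`, `h ≠ 0` and real polynomial `P` of degree at most `2n`,
`P′(0) = (1/(2h)) ∑_{m=1}^{n} α_m^{(1)}(n) (P(mh) - P(-mh))`. -/
theorem central_diff_first_deriv_exact (n : ℕ) (hn : 1 ≤ n) (h : ℝ) (hh : h ≠ 0)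
    (P : Polynomial ℝ) (hP : P.degree ≤ 2 * n) :
    (Polynomial.derivative P).eval 0 =
      (1 / (2 * h)) *
        ∑ m ∈ Finset.Icc 1 n, alpha1 n m * (P.eval ((m : ℝ) * h) - P.eval (-((m : ℝ) * h))) :=
  central_diff_first_deriv_exact_general n h hh P hP
end

section
/- For every fixed integer m ≥ 1, the limit of π_m(n) as n → ∞ exists and equals (−1)^{m+1}/2. -/
/-!
Split `1 - m²/k² = (1 - m/k)(1 + m/k)`. Both partial products telescope into binomial
coefficients: `∏_{k ≤ n} (1 + m/k) = C(n+m, m)`, where the omitted factor `k = m` equals `2`, and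
`∏_{k ≤ n, k ≠ m} (1 - m/k) = (-1)^(m+1) / C(n, m)`. Hence
`π_m(n) = (-1)^(m+1)/2 · C(n+m, m) / C(n, m)`, and the ratio tends to `1` because both binomial
coefficients are asymptotic to `n^m / m!`.
-/

open Finset Filter Asymptotics Topology

lemma prod_Icc_one_add_div (m n : ℕ) :
    ∏ k ∈ Icc 1 n, (1 + (m : ℝ) / k) = (n + m).choose m := by
  induction n with
  | zero => simp
  | succ n ih =>
    rw [prod_Icc_succ_top (by omega), ih]
    have h := Nat.choose_mul_succ_eq (n + m) m
    rw [show n + m + 1 - m = n + 1 by omega, show n + m + 1 = n + 1 + m by omega] at h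
    have h' := congrArg (Nat.cast (R := ℝ)) h
    push_cast at h' ⊢
    field_simp
    linarith

lemma prod_Icc_one_sub_succ_div (m n : ℕ) :
    ∏ k ∈ Icc 1 n, (1 - ((m : ℝ) + 1) / k) = (-1) ^ n * m.choose n := by
  induction n with
  | zero => simp
  | succ n ih =>
    rw [prod_Icc_succ_top (by omega), ih]
    rcases le_or_gt n m with hnm | hmn
    · have h := congrArg (Nat.cast (R := ℝ)) (Nat.choose_succ_right_eq m n)
      push_cast [Nat.cast_sub hnm] at h ⊢
      field_simp
      linear_combination (-1) ^ n * h
    · simp [Nat.choose_eq_zero_of_lt hmn, Nat.choose_eq_zero_of_lt (hmn.trans n.lt_succ_self)]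

lemma prod_Icc_erase_one_sub_div {m n : ℕ} (hm : 1 ≤ m) (hmn : m ≤ n) :
    ∏ k ∈ (Icc 1 n).erase m, (1 - (m : ℝ) / k) = (-1) ^ (m + 1) / n.choose m := by
  induction n, hmn using Nat.le_induction with
  | base =>
    obtain ⟨m, rfl⟩ := Nat.exists_eq_add_of_le' hm
    rw [Icc_erase_right, Ico_add_one_right_eq_Icc, Nat.choose_self]
    push_cast
    rw [prod_Icc_one_sub_succ_div, Nat.choose_self, pow_succ, pow_succ]
    simp
  | succ n hmn ih =>
    rw [show (Icc 1 (n + 1)).erase m = insert (n + 1) ((Icc 1 n).erase m) by ext; simp; omega,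
      prod_insert (by simp), ih]
    have h := congrArg (Nat.cast (R := ℝ)) (Nat.choose_mul_succ_eq n m)
    push_cast [Nat.cast_sub (hmn.trans n.le_succ)] at h ⊢
    have hn : (n.choose m : ℝ) ≠ 0 := by exact_mod_cast (Nat.choose_pos hmn).ne'
    have hn' : ((n + 1).choose m : ℝ) ≠ 0 := by
      exact_mod_cast (Nat.choose_pos (hmn.trans n.le_succ)).ne'
    field_simp
    linarith

lemma tendsto_choose_add_div_choose (a k : ℕ) :
    Tendsto (fun n : ℕ => ((n + a).choose k : ℝ) / n.choose k) atTop (𝓝 1) := by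
  have hshift : (fun n : ℕ => (n : ℝ) + a) ~[atTop] fun n => (n : ℝ) :=
    (isEquivalent_of_tendsto_one (tendsto_natCast_div_add_atTop (a : ℝ))).symm
  have hequiv : (fun n : ℕ => ((n + a).choose k : ℝ)) ~[atTop] fun n => (n.choose k : ℝ) := by
    have hpow : (fun n : ℕ => ((n : ℝ) + a) ^ k / k.factorial) ~[atTop]
        fun n => (n : ℝ) ^ k / k.factorial :=
      (hshift.pow k).div IsEquivalent.refl
    refine ((isEquivalent_choose k).comp_tendsto (tendsto_add_atTop_nat a)).trans ?_
    refine IsEquivalent.trans ?_ (isEquivalent_choose k).symm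
    exact hpow.congr_left (.of_forall fun n => by simp)
  refine (isEquivalent_iff_tendsto_one ?_).mp hequiv
  filter_upwards [eventually_ge_atTop k] with n hn
  exact_mod_cast (Nat.choose_pos hn).ne'

lemma pim_eq_choose_div_choose {m n : ℕ} (hm : 1 ≤ m) (hmn : m ≤ n) :
    pim n m = (-1) ^ (m + 1) / 2 * ((n + m).choose m / n.choose m) := by
  have hfactor : ∀ k ∈ (Icc 1 n).erase m,
      1 - (m : ℝ) ^ 2 / k ^ 2 = (1 - m / k) * (1 + m / k) := by
    intro k hk
    have hk : (k : ℝ) ≠ 0 := by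
      have := (mem_Icc.mp (mem_of_mem_erase hk)).1
      positivity
    field_simp
    ring
  have hplus : ∏ k ∈ (Icc 1 n).erase m, (1 + (m : ℝ) / k) = (n + m).choose m / 2 := by
    have hm0 : (m : ℝ) ≠ 0 := by positivity
    rw [← prod_Icc_one_add_div, ← mul_prod_erase _ _ (mem_Icc.mpr ⟨hm, hmn⟩), div_self hm0]
    ring
  rw [pim, prod_congr rfl hfactor, prod_mul_distrib, prod_Icc_erase_one_sub_div hm hmn, hplus]
  ring

/-- for every fixed integer `m ≥ 1`,
`π_m(n) → (-1)^(m+1) / 2` as `n → ∞`. -/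
theorem pim_tendsto (m : ℕ) (hm : 1 ≤ m) :
    Filter.Tendsto (fun n : ℕ => pim n m) Filter.atTop
      (nhds ((-1 : ℝ) ^ (m + 1) / 2)) := by
  have hlim := (tendsto_choose_add_div_choose m m).const_mul ((-1 : ℝ) ^ (m + 1) / 2)
  rw [mul_one] at hlim
  refine hlim.congr' ?_
  filter_upwards [eventually_ge_atTop m] with n hn
  exact (pim_eq_choose_div_choose hm hn).symm
end

section
/- For every fixed integer m ≥ 1, the limit of α_m^{(1)}(n) as n → ∞ exists and equals (−1)^{m+1} · 2/m. -/
open Finset Filter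

private lemma factR_ne (k : ℕ) : ((k.factorial : ℝ)) ≠ 0 := by
  exact_mod_cast Nat.factorial_ne_zero k

/-- Partial products up to `j < m`. -/
private lemma aux_prod (p : ℕ) : ∀ j, j ≤ p →
    ∏ k ∈ Finset.Icc 1 j, (1 - ((p : ℝ) + 1) ^ 2 / (k : ℝ) ^ 2)
      = (-1) ^ j * ((p.factorial : ℝ) * ((p + 1 + j).factorial : ℝ))
        / (((p - j).factorial : ℝ) * ((p + 1).factorial : ℝ) * ((j.factorial : ℝ)) ^ 2) := by
  intro j
  induction j with
  | zero =>
    intro _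
    simp [Nat.factorial]
    field_simp
  | succ j IH =>
    intro hj
    obtain ⟨q, rfl⟩ : ∃ q, p = j + 1 + q := ⟨p - (j + 1), by omega⟩
    rw [Finset.prod_Icc_succ_top (by omega : 1 ≤ j + 1), IH (by omega)]
    have h1 : j + 1 + q - j = q + 1 := by omega
    have h2 : j + 1 + q - (j + 1) = q := by omega
    have h3 : j + 1 + q + 1 + (j + 1) = (j + 1 + q + 1 + j) + 1 := by omega
    rw [h1, h2, h3]
    have f1 : (((q + 1).factorial : ℝ)) = (q + 1) * (q.factorial : ℝ) := by
      push_cast [Nat.factorial_succ]; ring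
    have f2 : ((((j + 1 + q + 1 + j) + 1).factorial : ℝ))
        = ((j : ℝ) + 1 + q + 1 + j + 1) * (((j + 1 + q + 1 + j).factorial : ℝ)) := by
      push_cast [Nat.factorial_succ]; ring
    have f3 : (((j + 1).factorial : ℝ)) = ((j : ℝ) + 1) * (j.factorial : ℝ) := by
      push_cast [Nat.factorial_succ]; ring
    rw [f1, f2, f3]
    have hj1 : ((j : ℝ) + 1) ≠ 0 := by positivity
    have hq1 : ((q : ℝ) + 1) ≠ 0 := by positivity
    push_cast
    field_simp
    ring

/-- Closed form for `pim`. -/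
private lemma pim_eq (m : ℕ) (hm : 1 ≤ m) : ∀ n, m ≤ n →
    pim n m = (-1 : ℝ) ^ (m - 1) * (((n - m).factorial : ℝ) * ((n + m).factorial : ℝ))
      / (2 * ((n.factorial : ℝ)) ^ 2) := by
  obtain ⟨p, rfl⟩ : ∃ p, m = p + 1 := ⟨m - 1, by omega⟩
  intro n
  induction n with
  | zero => intro h; omega
  | succ n IH =>
    intro hn
    rcases Nat.lt_or_ge n (p + 1) with hlt | hge
    · -- base case: n + 1 = p + 1, i.e. n = p
      have hnp : n = p := by omega
      subst hnp
      have hset : (Finset.Icc 1 (n + 1)).erase (n + 1) = Finset.Icc 1 n := by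
        ext k
        simp only [Finset.mem_erase, Finset.mem_Icc]
        omega
      have := aux_prod n n le_rfl
      rw [pim]
      push_cast at this ⊢
      rw [hset, this]
      have h3 : n - n = 0 := by omega
      rw [h3]
      have h4 : n + 1 + n = 2 * n + 1 := by omega
      have h5 : n + 1 + (n + 1) = (2 * n + 1) + 1 := by omega
      rw [h4, h5]
      have f2 : ((((2 * n + 1) + 1).factorial : ℝ))
          = (2 * (n : ℝ) + 2) * (((2 * n + 1).factorial : ℝ)) := by
        push_cast [Nat.factorial_succ]; ring
      have f3 : (((n + 1).factorial : ℝ)) = ((n : ℝ) + 1) * (n.factorial : ℝ) := by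
        push_cast [Nat.factorial_succ]; ring
      rw [f2, f3]
      have hn1 : ((n : ℝ) + 1) ≠ 0 := by positivity
      simp only [Nat.factorial_zero]
      field_simp
      ring
    · -- inductive step: n ≥ p + 1
      have hset : (Finset.Icc 1 (n + 1)).erase (p + 1)
          = insert (n + 1) ((Finset.Icc 1 n).erase (p + 1)) := by
        ext k
        simp only [Finset.mem_erase, Finset.mem_Icc, Finset.mem_insert]
        omega
      have hnotmem : (n + 1) ∉ (Finset.Icc 1 n).erase (p + 1) := by
        simp only [Finset.mem_erase, Finset.mem_Icc]
        omega
      rw [pim, hset, Finset.prod_insert hnotmem, ← pim, IH hge]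
      obtain ⟨d, rfl⟩ : ∃ d, n = p + 1 + d := ⟨n - (p + 1), by omega⟩
      have h1 : p + 1 + d - (p + 1) = d := by omega
      have h2 : p + 1 + d + 1 - (p + 1) = d + 1 := by omega
      have h3 : p + 1 + d + 1 + (p + 1) = (p + 1 + d + (p + 1)) + 1 := by omega
      rw [h1, h2, h3]
      have f1 : (((d + 1).factorial : ℝ)) = ((d : ℝ) + 1) * (d.factorial : ℝ) := by
        push_cast [Nat.factorial_succ]; ring
      have f2 : ((((p + 1 + d + (p + 1)) + 1).factorial : ℝ))
          = ((p : ℝ) + 1 + d + (p + 1) + 1) * (((p + 1 + d + (p + 1)).factorial : ℝ)) := by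
        push_cast [Nat.factorial_succ]; ring
      have f3 : (((p + 1 + d + 1).factorial : ℝ))
          = ((p : ℝ) + 1 + d + 1) * (((p + 1 + d).factorial : ℝ)) := by
        push_cast [Nat.factorial_succ]; ring
      rw [f1, f2, f3]
      have hnn : ((p : ℝ) + 1 + d + 1) ≠ 0 := by positivity
      push_cast
      field_simp
      ring

/-- The factorial ratio as a finite product. -/
private lemma ratio_eq (m : ℕ) : ∀ n, m ≤ n →
    ((n.factorial : ℝ)) ^ 2 / (((n - m).factorial : ℝ) * ((n + m).factorial : ℝ))
      = ∏ j ∈ Finset.range m, (((n : ℝ) - j) / ((n : ℝ) + 1 + j)) := by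
  induction m with
  | zero =>
    intro n _
    simp only [Nat.sub_zero, Nat.add_zero, Finset.range_zero, Finset.prod_empty, pow_two]
    exact div_self (mul_ne_zero (factR_ne n) (factR_ne n))
  | succ m IH =>
    intro n hn
    rw [Finset.prod_range_succ, ← IH n (by omega)]
    obtain ⟨d, rfl⟩ : ∃ d, n = m + 1 + d := ⟨n - (m + 1), by omega⟩
    have h1 : m + 1 + d - m = d + 1 := by omega
    have h2 : m + 1 + d - (m + 1) = d := by omega
    have h3 : m + 1 + d + (m + 1) = (m + 1 + d + m) + 1 := by omega
    rw [h1, h2, h3]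
    have f1 : (((d + 1).factorial : ℝ)) = ((d : ℝ) + 1) * (d.factorial : ℝ) := by
      push_cast [Nat.factorial_succ]; ring
    have f2 : ((((m + 1 + d + m) + 1).factorial : ℝ))
        = ((m : ℝ) + 1 + d + m + 1) * (((m + 1 + d + m).factorial : ℝ)) := by
      push_cast [Nat.factorial_succ]; ring
    rw [f1, f2]
    have hnn : ((m : ℝ) + 1 + d + m + 1) ≠ 0 := by positivity
    have hd1 : ((d : ℝ) + 1) ≠ 0 := by positivity
    push_cast
    field_simp
    ring

private lemma prod_tendsto (m : ℕ) :
    Filter.Tendsto (fun n : ℕ => ∏ j ∈ Finset.range m, (((n : ℝ) - j) / ((n : ℝ) + 1 + j)))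
      Filter.atTop (nhds 1) := by
  have factor : ∀ j : ℕ, Filter.Tendsto (fun n : ℕ => ((n : ℝ) - j) / ((n : ℝ) + 1 + j))
      Filter.atTop (nhds 1) := by
    intro j
    have heq : ∀ n : ℕ, ((n : ℝ) - j) / ((n : ℝ) + 1 + j)
        = 1 - (1 + 2 * (j : ℝ)) / ((n : ℝ) + 1 + j) := by
      intro n
      have : ((n : ℝ) + 1 + j) ≠ 0 := by positivity
      field_simp
      ring
    have h0 : Filter.Tendsto (fun n : ℕ => (1 + 2 * (j : ℝ)) / ((n : ℝ) + 1 + j))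
        Filter.atTop (nhds 0) := by
      apply Filter.Tendsto.div_atTop tendsto_const_nhds
      apply Filter.tendsto_atTop_add_const_right
      exact Filter.tendsto_atTop_add_const_right _ 1 tendsto_natCast_atTop_atTop
    have h1 : Filter.Tendsto (fun n : ℕ => 1 - (1 + 2 * (j : ℝ)) / ((n : ℝ) + 1 + j))
        Filter.atTop (nhds 1) := by
      have := (tendsto_const_nhds : Filter.Tendsto (fun _ : ℕ => (1 : ℝ)) Filter.atTop
        (nhds 1)).sub h0
      simpa using this
    exact h1.congr (fun n => (heq n).symm)
  have := tendsto_finset_prod (Finset.range m)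
    (fun j (_ : j ∈ Finset.range m) => factor j)
  simpa using this

/-- for every fixed integer `m ≥ 1`,
`α_m^{(1)}(n) → (-1)^(m+1) · 2 / m` as `n → ∞`. -/
theorem alpha1_tendsto (m : ℕ) (hm : 1 ≤ m) :
    Filter.Tendsto (fun n : ℕ => alpha1 n m) Filter.atTop
      (nhds ((-1 : ℝ) ^ (m + 1) * 2 / (m : ℝ))) := by
  have key : Filter.Tendsto
      (fun n : ℕ => ((-1 : ℝ) ^ (m + 1) * 2 / (m : ℝ))
        * ∏ j ∈ Finset.range m, (((n : ℝ) - j) / ((n : ℝ) + 1 + j)))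
      Filter.atTop (nhds ((-1 : ℝ) ^ (m + 1) * 2 / (m : ℝ))) := by
    have := (prod_tendsto m).const_mul ((-1 : ℝ) ^ (m + 1) * 2 / (m : ℝ))
    simpa using this
  apply key.congr'
  filter_upwards [Filter.eventually_ge_atTop m] with n hn
  rw [← ratio_eq m n hn]
  rw [alpha1, pim_eq m hm n hn]
  have hsign : (-1 : ℝ) ^ (m + 1) * (-1 : ℝ) ^ (m - 1) = 1 := by
    rw [← pow_add]
    have : m + 1 + (m - 1) = 2 * m := by omega
    rw [this, pow_mul]
    norm_num
  have hmne : ((m : ℝ)) ≠ 0 := Nat.cast_ne_zero.mpr (by omega)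
  have hA := factR_ne (n - m)
  have hB := factR_ne (n + m)
  have hC := factR_ne n
  have hs_eq : (-1 : ℝ) ^ (m - 1) = (-1 : ℝ) ^ (m + 1) := by
    obtain ⟨p, rfl⟩ : ∃ p, m = p + 1 := ⟨m - 1, by omega⟩
    have h1 : p + 1 - 1 = p := by omega
    have h2 : p + 1 + 1 = p + 2 := by omega
    rw [h1, h2, pow_add]
    norm_num
  rw [hs_eq]
  set t : ℝ := (-1 : ℝ) ^ (m + 1) with htdef
  have ht2 : t * t = 1 := by
    rw [htdef, ← pow_add]
    have : m + 1 + (m + 1) = 2 * (m + 1) := by omega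
    rw [this, pow_mul]
    norm_num
  set A : ℝ := ((n - m).factorial : ℝ)
  set B : ℝ := ((n + m).factorial : ℝ)
  set C : ℝ := ((n.factorial : ℝ))
  have ht0 : t ≠ 0 := by
    intro h
    rw [h, mul_zero] at ht2
    norm_num at ht2
  have hC2 : C ^ 2 ≠ 0 := pow_ne_zero 2 hC
  field_simp
  have hpow : (-1 : ℝ) ^ (m * 2) = 1 := by rw [pow_mul']; norm_num
  linear_combination hpow
end

section
/- With h = π/2, the central-difference approximation to the derivative of sin at 0 converges to the exact value as the number of interpolation points tends to infinity: lim_{n→∞} (1/(2h)) ∑_{m=1}^{n} α_m^{(1)}(n) · (sin(mh) − sin(−mh)) = 1. Equivalently, lim_{n→∞} (2/π) ∑_{0 ≤ j, 2j+1 ≤ n} (−1)^{j} α_{2j+1}^{(1)}(n) = 1. -/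
open Finset Filter Real

section CDS
open Nat


lemma cds_fact_prod (a b : ℕ) : (a + b)! = a ! * ∏ i ∈ range b, (a + 1 + i) := by
  induction b with
  | zero => simp
  | succ b ih =>
    rw [Finset.prod_range_succ, ← mul_assoc, ← ih]
    rw [show a + (b+1) = (a+b)+1 by ring, Nat.factorial_succ]
    ring

lemma cds_fact_sq_le (r m : ℕ) : ((m + r)!)^2 ≤ r ! * (2*m + r)! := by
  induction m with
  | zero => simp [pow_two, Nat.mul_comm]
  | succ m ih =>
    have h1 : ((m + 1 + r)!) ^ 2 = (m+1+r)^2 * ((m+r)!)^2 := by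
      rw [show m+1+r = (m+r)+1 by ring, Nat.factorial_succ]; ring
    have h2 : (2*(m+1) + r)! = (2*m+r+2)*((2*m+r+1)*(2*m+r)!) := by
      rw [show 2*(m+1)+r = (2*m+r+1)+1 by ring, Nat.factorial_succ, Nat.factorial_succ]
    calc ((m + 1 + r)!) ^ 2 = (m+1+r)^2 * ((m+r)!)^2 := h1
    _ ≤ ((2*m+r+2)*(2*m+r+1)) * (r ! * (2*m+r)!) := by
        refine Nat.mul_le_mul ?_ ih
        rw [pow_two]
        exact Nat.mul_le_mul (by omega) (by omega)
    _ = r ! * (2*(m+1) + r)! := by rw [h2]; ring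

lemma cds_step (m r : ℕ) : m * ((r+2)! * (2*m+2+r)!) ≤ (m+2) * (r ! * (2*m+4+r)!) := by
  have h1 : (r+2)! = (r+2)*((r+1)*r !) := by
    rw [Nat.factorial_succ, Nat.factorial_succ]
  have h2 : (2*m+4+r)! = (2*m+4+r)*((2*m+3+r)*(2*m+2+r)!) := by
    rw [show 2*m+4+r = (2*m+3+r)+1 by ring, Nat.factorial_succ,
        show 2*m+3+r = (2*m+2+r)+1 by ring, Nat.factorial_succ]
  rw [h1, h2]
  calc m * ((r+2)*((r+1)*r !) * (2*m+2+r)!)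
      = (m * ((r+2)*(r+1))) * (r ! * (2*m+2+r)!) := by ring
    _ ≤ ((m+2) * ((2*m+4+r)*(2*m+3+r))) * (r ! * (2*m+2+r)!) := by
        refine Nat.mul_le_mul ?_ le_rfl
        exact Nat.mul_le_mul (by omega) (Nat.mul_le_mul (by omega) (by omega))
    _ = (m+2) * (r ! * ((2*m+4+r)*((2*m+3+r)*(2*m+2+r)!))) := by ring

lemma cds_alt (b : ℕ → ℝ) (h0 : ∀ i, 0 ≤ b i) (h1 : ∀ i, b (i+1) ≤ b i) (N : ℕ) :
    0 ≤ ∑ j ∈ range N, (-1:ℝ)^j * b j ∧ ∑ j ∈ range N, (-1:ℝ)^j * b j ≤ b 0 := by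
  induction N generalizing b with
  | zero => simpa using h0 0
  | succ N ih =>
    rw [Finset.sum_range_succ']
    have hrw : ∑ i ∈ range N, (-1:ℝ)^(i+1) * b (i+1)
        = - ∑ i ∈ range N, (-1:ℝ)^i * b (i+1) := by
      rw [← Finset.sum_neg_distrib]
      exact Finset.sum_congr rfl fun i _ => by ring
    rw [hrw]
    obtain ⟨hl, hr⟩ := ih (fun i => b (i+1)) (fun i => h0 (i+1)) (fun i => h1 (i+1))
    simp only [pow_zero, one_mul]
    constructor
    · have := h1 0; linarith
    · linarith [h0 1]


lemma cds_pim_base (M : ℕ) :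
    pim (M+1) (M+1) = (-1:ℝ)^M * ((2*(M+1))! : ℝ) / (2 * ((M+1)! : ℝ)^2) := by
  have h0 : pim (M+1) (M+1) = ∏ i ∈ range M, (1 - ((M+1:ℕ) : ℝ)^2 / ((1+i : ℕ) : ℝ)^2) := by
    rw [pim, Finset.Icc_erase_right, Finset.prod_Ico_eq_prod_range]
    simp
  -- each factor
  have hfac : ∀ i ∈ range M, (1 - ((M+1:ℕ) : ℝ)^2 / ((1+i : ℕ) : ℝ)^2)
      = (-1) * (((M - i : ℕ) : ℝ) * ((M+2+i : ℕ) : ℝ)) / ((1+i : ℕ) : ℝ)^2 := by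
    intro i hi
    rw [Finset.mem_range] at hi
    have h1 : (0:ℝ) < ((1+i:ℕ):ℝ) := by positivity
    have hMi : ((M - i : ℕ) : ℝ) = (M : ℝ) - i := by
      rw [Nat.cast_sub hi.le]
    field_simp
    rw [hMi]
    push_cast
    ring
  rw [h0, Finset.prod_congr rfl hfac]
  have hsplit : ∀ i : ℕ, (-1:ℝ) * (((M - i : ℕ) : ℝ) * ((M+2+i : ℕ) : ℝ)) / ((1+i : ℕ) : ℝ)^2
      = (-1) * ((((M - i : ℕ) : ℝ) * ((M+2+i : ℕ) : ℝ)) / ((1+i : ℕ) : ℝ)^2) := fun i => by ring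
  simp only [hsplit]
  rw [Finset.prod_mul_distrib, Finset.prod_const, Finset.card_range, Finset.prod_div_distrib,
      Finset.prod_mul_distrib]
  -- now compute the three natural products
  have p1 : ∏ i ∈ range M, ((M - i : ℕ) : ℝ) = (M ! : ℝ) := by
    rw [← Nat.cast_prod]
    congr 1
    have : ∀ i ∈ range M, M - i = (fun j => j + 1) (M - 1 - i) := by
      intro i hi; rw [Finset.mem_range] at hi; simp; omega
    rw [Finset.prod_congr rfl this, Finset.prod_range_reflect (fun j => j + 1) M,
        Finset.prod_range_add_one_eq_factorial]
  have p2 : (M+1)! * ∏ i ∈ range M, (M+2+i) = (2*M+1)! := by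
    have := cds_fact_prod (M+1) M
    rw [show M+1+M = 2*M+1 by ring] at this
    rw [← this]
  have p3 : ∏ i ∈ range M, ((1+i : ℕ) : ℝ) = (M ! : ℝ) := by
    rw [← Nat.cast_prod]
    congr 1
    simpa [Nat.add_comm] using Finset.prod_range_add_one_eq_factorial M
  have p2' : ∏ i ∈ range M, ((M+2+i : ℕ) : ℝ) = ((2*M+1)! : ℝ) / ((M+1)! : ℝ) := by
    have hne : ((M+1)! : ℝ) ≠ 0 := Nat.cast_ne_zero.2 (Nat.factorial_ne_zero _)
    rw [eq_div_iff hne, mul_comm, ← Nat.cast_prod, ← Nat.cast_mul, p2]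
  have p3sq : ∏ i ∈ range M, ((1+i : ℕ) : ℝ)^2 = (M ! : ℝ)^2 := by
    rw [Finset.prod_pow, p3]
  rw [p1, p2', p3sq]
  have hf1 : ((M+1)! : ℝ) = (M+1) * (M !) := by push_cast [Nat.factorial_succ]; ring
  have hf2 : ((2*(M+1))! : ℝ) = (2*M+2) * ((2*M+1)!) := by
    rw [show 2*(M+1) = (2*M+1)+1 by ring]
    push_cast [Nat.factorial_succ]; ring
  have hM : (M ! : ℝ) ≠ 0 := Nat.cast_ne_zero.2 (Nat.factorial_ne_zero _)
  have h2M : ((2*M+1)! : ℝ) ≠ 0 := Nat.cast_ne_zero.2 (Nat.factorial_ne_zero _)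
  rw [hf1, hf2]
  field_simp

lemma cds_pim (M r : ℕ) :
    pim (M+1+r) (M+1) = (-1:ℝ)^M * ((r ! : ℝ) * (((2*(M+1)+r)!) : ℝ)) / (2 * (((M+1+r)!) : ℝ)^2) := by
  induction r with
  | zero => simpa using cds_pim_base M
  | succ r ih =>
    have hN : M+1+(r+1) = (M+1+r)+1 := by ring
    have hstep : pim (M+1+(r+1)) (M+1) = pim (M+1+r) (M+1) *
        (1 - ((M+1:ℕ) : ℝ)^2 / (((M+1+r+1 : ℕ)) : ℝ)^2) := by
      rw [pim, pim, hN]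
      have hins : Finset.Icc 1 (M+1+r+1) = insert (M+1+r+1) (Finset.Icc 1 (M+1+r)) := by
        rw [← Finset.Ico_insert_right (show 1 ≤ M+1+r+1 by omega), Finset.Ico_add_one_right_eq_Icc]
      rw [hins, Finset.erase_insert_of_ne (by omega)]
      rw [Finset.prod_insert (by simp)]
      ring
    rw [hstep, ih]
    have hNpos : (0:ℝ) < ((M+1+r+1 : ℕ) : ℝ) := by positivity
    have e1 : (((r+1)!) : ℝ) = (r+1) * (r ! : ℝ) := by push_cast [Nat.factorial_succ]; ring
    have e2 : (((2*(M+1)+(r+1))!) : ℝ) = (2*(M:ℝ)+2+r+1) * ((2*(M+1)+r)! : ℝ) := by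
      rw [show 2*(M+1)+(r+1) = (2*(M+1)+r)+1 by ring]
      push_cast [Nat.factorial_succ]; ring
    have e3 : (((M+1+(r+1))!) : ℝ) = ((M:ℝ)+1+r+1) * ((M+1+r)! : ℝ) := by
      rw [show M+1+(r+1) = (M+1+r)+1 by ring]
      push_cast [Nat.factorial_succ]; ring
    rw [e1, e2, e3]
    have h1 : ((M+1+r)! : ℝ) ≠ 0 := Nat.cast_ne_zero.2 (Nat.factorial_ne_zero _)
    have h2 : ((M:ℝ)+1+r+1) ≠ 0 := by positivity
    have hc : ((M+1+r+1 : ℕ) : ℝ) = (M:ℝ)+1+r+1 := by push_cast; ring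
    rw [hc]
    field_simp
    push_cast
    ring

noncomputable def cdsB (n j : ℕ) : ℝ :=
  2 * (n ! : ℝ)^2 / ((2*j+1) * ((n - (2*j+1))! : ℝ) * ((n + (2*j+1))! : ℝ))

noncomputable def cdsb (n j : ℕ) : ℝ := if 2*j+1 ≤ n then cdsB n j else 0

lemma cds_alpha (n j : ℕ) (h : 2*j+1 ≤ n) : alpha1 n (2*j+1) = cdsB n j := by
  obtain ⟨r, hr⟩ : ∃ r, n = 2*j+1+r := ⟨n - (2*j+1), by omega⟩
  subst hr
  have hpim := cds_pim (2*j) r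
  rw [show 2*j+1+r = 2*j+1+r by rfl] at hpim
  rw [alpha1, show (2*j+1 : ℕ) = 2*j+1 by rfl]
  rw [show (2*j)+1+r = 2*j+1+r by ring] at hpim
  rw [hpim]
  rw [cdsB, show 2*j+1+r - (2*j+1) = r by omega, show 2*j+1+r + (2*j+1) = 2*(2*j+1)+r by ring]
  have h1 : ((2*j+1+r)! : ℝ) ≠ 0 := Nat.cast_ne_zero.2 (Nat.factorial_ne_zero _)
  have h2 : (r ! : ℝ) ≠ 0 := Nat.cast_ne_zero.2 (Nat.factorial_ne_zero _)
  have h3 : ((2*(2*j+1)+r)! : ℝ) ≠ 0 := Nat.cast_ne_zero.2 (Nat.factorial_ne_zero _)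
  have h4 : ((2*(2*j)+2+r)! : ℝ) ≠ 0 := Nat.cast_ne_zero.2 (Nat.factorial_ne_zero _)
  have hm1 : (-1:ℝ)^(2*j) = 1 := by
    rw [pow_mul]; norm_num
  rw [hm1, show 2*(2*j+1)+r = 2*(2*j)+2+r by ring]
  have hmpos : (0:ℝ) < (2*j+1 : ℕ) := by positivity
  push_cast
  field_simp



lemma cds_fact_cast_pos (k : ℕ) : (0:ℝ) < (k ! : ℝ) :=
  Nat.cast_pos.2 (Nat.factorial_pos k)

lemma cds_bb_nonneg (n j : ℕ) : 0 ≤ cdsb n j := by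
  rw [cdsb]
  split
  · rw [cdsB]; positivity
  · exact le_refl 0

lemma cds_bb_le (n j : ℕ) : cdsb n j ≤ 2 / (2*j+1) := by
  rw [cdsb]
  split
  case isTrue h =>
    rw [cdsB]
    rw [div_le_div_iff₀ (by positivity) (by positivity)]
    obtain ⟨r, hr⟩ : ∃ r, n = 2*j+1+r := ⟨n - (2*j+1), by omega⟩
    subst hr
    rw [show 2*j+1+r - (2*j+1) = r by omega, show 2*j+1+r + (2*j+1) = 2*(2*j+1)+r by ring]
    have key := cds_fact_sq_le r (2*j+1)
    have keyR : ((2*j+1+r)! : ℝ)^2 ≤ (r ! : ℝ) * ((2*(2*j+1)+r)! : ℝ) := by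
      have := Nat.cast_le (α := ℝ).2 key
      push_cast at this
      convert this using 2 <;> push_cast <;> ring
    nlinarith [cds_fact_cast_pos (2*j+1+r), cds_fact_cast_pos r,
      cds_fact_cast_pos (2*(2*j+1)+r), (by positivity : (0:ℝ) < (2*(j:ℝ)+1))]
  case isFalse h =>
    positivity

lemma cds_bb_antitone (n j : ℕ) : cdsb n (j+1) ≤ cdsb n j := by
  by_cases h2 : 2*(j+1)+1 ≤ n
  · have h1 : 2*j+1 ≤ n := by omega
    rw [cdsb, cdsb, if_pos h2, if_pos h1, cdsB, cdsB]
    have hnum : (0:ℝ) ≤ 2 * (n ! : ℝ)^2 := by positivity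
    apply div_le_div_of_nonneg_left hnum (by positivity)
    -- need: (2j+1) * (n-(2j+1))! * (n+(2j+1))! ≤ (2(j+1)+1) * (n-(2(j+1)+1))! * (n+(2(j+1)+1))!
    obtain ⟨r, hr⟩ : ∃ r, n = 2*j+3+r := ⟨n - (2*j+3), by omega⟩
    subst hr
    rw [show 2*j+3+r - (2*j+1) = r+2 by omega, show 2*j+3+r - (2*(j+1)+1) = r by omega,
        show 2*j+3+r + (2*j+1) = 2*(2*j+1)+2+r by ring,
        show 2*j+3+r + (2*(j+1)+1) = 2*(2*j+1)+4+r by ring]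
    have key := cds_step (2*j+1) r
    have keyR : ((2*j+1:ℝ)) * (((r+2)! : ℝ) * ((2*(2*j+1)+2+r)! : ℝ))
        ≤ ((2*(j+1)+1:ℝ)) * ((r ! : ℝ) * ((2*(2*j+1)+4+r)! : ℝ)) := by
      have := Nat.cast_le (α := ℝ).2 key
      push_cast at this ⊢
      linarith [this]
    push_cast at keyR ⊢
    nlinarith [keyR]
  · rw [cdsb, if_neg h2]
    exact cds_bb_nonneg n j

lemma cds_B_prod (n j : ℕ) (h : 2*j+1 ≤ n) :
    cdsB n j = 2 / (2*j+1) *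
      ∏ i ∈ range (2*j+1), ((n - (2*j+1) + 1 + i : ℕ) : ℝ) / ((n + 1 + i : ℕ) : ℝ) := by
  set m := 2*j+1 with hm
  have e1 : (n + m)! = n ! * ∏ i ∈ range m, (n + 1 + i) := cds_fact_prod n m
  have e2 : n ! = (n - m)! * ∏ i ∈ range m, (n - m + 1 + i) := by
    have := cds_fact_prod (n - m) m
    rwa [show n - m + m = n by omega] at this
  rw [cdsB, Finset.prod_div_distrib]
  rw [show (2 * (n ! : ℝ)^2) = 2 * ((n-m)! : ℝ) * ((∏ i ∈ range m, ((n - m + 1 + i : ℕ):ℝ)) * (n ! : ℝ)) by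
        rw [pow_two]; nth_rewrite 1 [e2]; push_cast; ring]
  rw [show ((n + m)! : ℝ) = (n ! : ℝ) * ∏ i ∈ range m, ((n + 1 + i : ℕ) : ℝ) by
        rw [e1]; push_cast; ring]
  have hne1 : ((n-m)! : ℝ) ≠ 0 := (cds_fact_cast_pos _).ne'
  have hne2 : (n ! : ℝ) ≠ 0 := (cds_fact_cast_pos _).ne'
  have hne3 : ∏ i ∈ range m, ((n + 1 + i : ℕ) : ℝ) ≠ 0 := by
    apply Finset.prod_ne_zero_iff.2
    intro i _
    positivity
  have hm0 : ((m:ℝ)) ≠ 0 := by positivity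
  field_simp
  ring

lemma cds_ratio_tendsto (a b : ℝ) :
    Tendsto (fun n : ℕ => ((n:ℝ) + a) / ((n:ℝ) + b)) atTop (nhds 1) := by
  have hb : Tendsto (fun n : ℕ => (n:ℝ) + b) atTop atTop :=
    tendsto_atTop_add_const_right _ b tendsto_natCast_atTop_atTop
  have h0 : Tendsto (fun n : ℕ => (a - b) / ((n:ℝ) + b)) atTop (nhds 0) :=
    Tendsto.div_atTop tendsto_const_nhds hb
  have h1 : Tendsto (fun n : ℕ => 1 + (a - b) / ((n:ℝ) + b)) atTop (nhds 1) := by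
    simpa using tendsto_const_nhds.add h0
  apply h1.congr'
  filter_upwards [hb.eventually_gt_atTop 0] with n hn
  field_simp
  ring

lemma cds_bb_tendsto (j : ℕ) :
    Tendsto (fun n : ℕ => cdsb n j) atTop (nhds (2 / (2*(j:ℝ)+1))) := by
  set m := 2*j+1 with hm
  have hprod : Tendsto (fun n : ℕ => ∏ i ∈ range m, ((n - m + 1 + i : ℕ) : ℝ) / ((n + 1 + i : ℕ) : ℝ))
      atTop (nhds 1) := by
    have : (1:ℝ) = ∏ i ∈ range m, (1:ℝ) := by simp
    rw [this]
    apply tendsto_finset_prod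
    intro i _
    have := cds_ratio_tendsto (-(m:ℝ) + 1 + i) (1 + i)
    apply this.congr'
    filter_upwards [eventually_ge_atTop m] with n hn
    have : ((n - m + 1 + i : ℕ) : ℝ) = (n:ℝ) + (-(m:ℝ) + 1 + i) := by
      have : ((n - m : ℕ) : ℝ) = (n:ℝ) - m := by
        rw [Nat.cast_sub hn]
      push_cast [this]; ring
    rw [this]
    push_cast
    ring_nf
  have hlim : Tendsto (fun n : ℕ => 2 / ((m:ℝ)) *
      ∏ i ∈ range m, ((n - m + 1 + i : ℕ) : ℝ) / ((n + 1 + i : ℕ) : ℝ)) atTop (nhds (2 / (m:ℝ))) := by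
    simpa using hprod.const_mul (2 / (m:ℝ))
  have hcast : (m:ℝ) = 2*(j:ℝ)+1 := by push_cast [hm]; ring
  rw [← hcast]
  apply hlim.congr'
  filter_upwards [eventually_ge_atTop m] with n hn
  rw [cdsb, if_pos hn, cds_B_prod n j hn, hm]
  norm_num

noncomputable def cdsP (J : ℕ) : ℝ := ∑ i ∈ range J, (-1:ℝ)^i * (2 / (2*i+1))

lemma cds_alt_abs (b : ℕ → ℝ) (h0 : ∀ i, 0 ≤ b i) (h1 : ∀ i, b (i+1) ≤ b i) (N : ℕ) :
    |∑ j ∈ range N, (-1:ℝ)^j * b j| ≤ b 0 := by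
  obtain ⟨hl, hr⟩ := cds_alt b h0 h1 N
  rw [abs_le]
  exact ⟨by linarith [h0 0], hr⟩

lemma cds_P_tendsto : Tendsto cdsP atTop (nhds (π/2)) := by
  have h := Real.tendsto_sum_pi_div_four.const_mul (2:ℝ)
  have : (2:ℝ) * (π/4) = π/2 := by ring
  rw [this] at h
  apply h.congr
  intro k
  rw [Finset.mul_sum, cdsP]
  exact Finset.sum_congr rfl fun i _ => by push_cast; ring

lemma cds_P_tail (J : ℕ) : |π/2 - cdsP J| ≤ 2 / (2*J+1) := by
  have hb : ∀ N, |cdsP (J + N) - cdsP J| ≤ 2 / (2*(J:ℝ)+1) := by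
    intro N
    have : cdsP (J + N) - cdsP J = (-1:ℝ)^J * ∑ i ∈ range N, (-1:ℝ)^i * (2 / (2*((J:ℝ)+i)+1)) := by
      rw [cdsP, cdsP, Finset.sum_range_add]
      rw [Finset.mul_sum]
      have : ∀ i ∈ range N, (-1:ℝ)^(J+i) * (2 / (2*((J+i : ℕ):ℝ)+1))
          = (-1:ℝ)^J * ((-1:ℝ)^i * (2 / (2*((J:ℝ)+i)+1))) := by
        intro i _
        rw [pow_add]
        push_cast
        ring
      rw [Finset.sum_congr rfl this]
      ring
    rw [this, abs_mul, abs_pow, abs_neg, abs_one, one_pow, one_mul]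
    have := cds_alt_abs (fun i => 2 / (2*((J:ℝ)+i)+1))
      (fun i => by positivity)
      (fun i => by
        apply div_le_div_of_nonneg_left (by norm_num) (by positivity)
        push_cast; linarith)
      N
    simpa using this
  have hlim : Tendsto (fun N => |cdsP (J + N) - cdsP J|) atTop (nhds |π/2 - cdsP J|) := by
    have h1 : Tendsto (fun N => cdsP (J + N)) atTop (nhds (π/2)) := by
      apply cds_P_tendsto.comp
      exact tendsto_atTop_mono (fun N => Nat.le_add_left N J) tendsto_id
    exact ((h1.sub tendsto_const_nhds).abs)
  exact le_of_tendsto hlim (Filter.Eventually.of_forall hb)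

lemma cds_T_tendsto :
    Tendsto (fun n : ℕ => ∑ j ∈ range (n+1), (-1:ℝ)^j * cdsb n j) atTop (nhds (π/2)) := by
  rw [Metric.tendsto_atTop]
  intro ε hε
  -- choose J
  obtain ⟨J, hJ⟩ := exists_nat_gt (6 / ε)
  have hJpos : (0:ℝ) < 2*(J:ℝ)+1 := by
    have : (0:ℝ) ≤ (J:ℝ) := Nat.cast_nonneg J
    linarith
  have hJε : 2 / (2*(J:ℝ)+1) < ε / 3 := by
    rw [div_lt_div_iff₀ hJpos (by linarith)]
    have h6 : 6 / ε < (J:ℝ) := hJ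
    rw [div_lt_iff₀ hε] at h6
    nlinarith
  -- head tends to partial Leibniz
  have hhead : Tendsto (fun n : ℕ => ∑ j ∈ range J, (-1:ℝ)^j * cdsb n j) atTop (nhds (cdsP J)) := by
    rw [cdsP]
    apply tendsto_finset_sum
    intro j _
    exact (cds_bb_tendsto j).const_mul ((-1:ℝ)^j)
  have hhead' := Metric.tendsto_atTop.1 hhead (ε/3) (by linarith)
  obtain ⟨N0, hN0⟩ := hhead'
  refine ⟨max N0 J, fun n hn => ?_⟩
  have hnN0 : n ≥ N0 := le_trans (le_max_left _ _) hn
  have hnJ : J ≤ n := le_trans (le_max_right _ _) hn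
  -- decompose
  have hdecomp : ∑ j ∈ range (n+1), (-1:ℝ)^j * cdsb n j
      = (∑ j ∈ range J, (-1:ℝ)^j * cdsb n j)
        + (-1:ℝ)^J * ∑ i ∈ range (n+1-J), (-1:ℝ)^i * cdsb n (J+i) := by
    have key := Finset.sum_range_add (fun j => (-1:ℝ)^j * cdsb n j) J (n+1-J)
    rw [show J + (n+1-J) = n+1 by omega] at key
    rw [key]
    congr 1
    rw [Finset.mul_sum]
    exact Finset.sum_congr rfl fun i _ => by rw [pow_add]; ring
  have htail : |(-1:ℝ)^J * ∑ i ∈ range (n+1-J), (-1:ℝ)^i * cdsb n (J+i)| ≤ 2 / (2*(J:ℝ)+1) := by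
    rw [abs_mul, abs_pow, abs_neg, abs_one, one_pow, one_mul]
    refine le_trans (cds_alt_abs (fun i => cdsb n (J+i))
      (fun i => cds_bb_nonneg n _)
      (fun i => by
        show cdsb n (J+(i+1)) ≤ cdsb n (J+i)
        rw [show J+(i+1) = (J+i)+1 by omega]
        exact cds_bb_antitone n (J+i)) _) ?_
    rw [Nat.add_zero]
    exact cds_bb_le n J
  have hhd : |(∑ j ∈ range J, (-1:ℝ)^j * cdsb n j) - cdsP J| < ε/3 := by
    have := hN0 n hnN0
    rwa [Real.dist_eq] at this
  have hPtail := cds_P_tail J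
  rw [Real.dist_eq, hdecomp]
  have : (∑ j ∈ range J, (-1:ℝ)^j * cdsb n j)
        + (-1:ℝ)^J * (∑ i ∈ range (n+1-J), (-1:ℝ)^i * cdsb n (J+i)) - π/2
      = ((∑ j ∈ range J, (-1:ℝ)^j * cdsb n j) - cdsP J)
        + ((-1:ℝ)^J * ∑ i ∈ range (n+1-J), (-1:ℝ)^i * cdsb n (J+i))
        - (π/2 - cdsP J) := by ring
  rw [this]
  set X := (∑ j ∈ range J, (-1:ℝ)^j * cdsb n j) - cdsP J with hX
  set Y := (-1:ℝ)^J * ∑ i ∈ range (n+1-J), (-1:ℝ)^i * cdsb n (J+i) with hY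
  set Z := π/2 - cdsP J with hZ
  have htri : |X + Y - Z| ≤ |X| + |Y| + |Z| := by
    have h1 : |X + Y + -Z| ≤ |X + Y| + |-Z| := abs_add_le _ _
    have h2 : |X + Y| ≤ |X| + |Y| := abs_add_le _ _
    rw [abs_neg] at h1
    calc |X + Y - Z| = |X + Y + -Z| := by rw [sub_eq_add_neg]
      _ ≤ |X| + |Y| + |Z| := by linarith
  have hJε3 : (2:ℝ) / (2*(J:ℝ)+1) < ε/3 := hJε
  linarith [htail, hhd, hPtail]

lemma cds_filter_sum (n : ℕ) :
    ∑ j ∈ (Finset.range (n + 1)).filter (fun j => 2 * j + 1 ≤ n), (-1 : ℝ) ^ j * alpha1 n (2 * j + 1)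
      = ∑ j ∈ range (n+1), (-1:ℝ)^j * cdsb n j := by
  rw [Finset.sum_filter]
  refine Finset.sum_congr rfl fun j _ => ?_
  by_cases h : 2*j+1 ≤ n
  · rw [if_pos h, cdsb, if_pos h, cds_alpha n j h]
  · rw [if_neg h, cdsb, if_neg h, mul_zero]

lemma cds_sum_odd (n : ℕ) :
    ∑ m ∈ Finset.Icc 1 n, alpha1 n m *
        (Real.sin ((m : ℝ) * (Real.pi / 2)) - Real.sin (-((m : ℝ) * (Real.pi / 2))))
      = 2 * ∑ j ∈ (Finset.range (n + 1)).filter (fun j => 2 * j + 1 ≤ n),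
          (-1 : ℝ) ^ j * alpha1 n (2 * j + 1) := by
  have hterm : ∀ m : ℕ, alpha1 n m * (Real.sin ((m : ℝ) * (π / 2)) - Real.sin (-((m : ℝ) * (π / 2))))
      = alpha1 n m * (2 * Real.sin ((m : ℝ) * (π / 2))) := by
    intro m; rw [Real.sin_neg]; ring
  rw [Finset.sum_congr rfl fun m _ => hterm m]
  rw [← Finset.sum_filter_of_ne (p := fun m => Odd m) (by
    intro m _ hne
    by_contra hodd
    rw [Nat.not_odd_iff_even] at hodd
    obtain ⟨k, hk⟩ := hodd
    apply hne
    have : ((m:ℝ)) * (π/2) = (k:ℝ) * π := by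
      rw [hk]; push_cast; ring
    rw [this, Real.sin_nat_mul_pi, mul_zero, mul_zero])]
  rw [Finset.mul_sum]
  refine Finset.sum_nbij' (fun m => m / 2) (fun j => 2*j+1) ?_ ?_ ?_ ?_ ?_
  · intro m hm
    simp only [Finset.mem_filter, Finset.mem_Icc, Finset.mem_range] at hm ⊢
    obtain ⟨⟨h1, h2⟩, k, hk⟩ := hm
    omega
  · intro j hj
    simp only [Finset.mem_filter, Finset.mem_Icc, Finset.mem_range] at hj ⊢
    exact ⟨⟨by omega, by omega⟩, ⟨j, by omega⟩⟩
  · intro m hm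
    simp only [Finset.mem_filter, Finset.mem_Icc] at hm
    obtain ⟨_, k, hk⟩ := hm
    show 2 * (m / 2) + 1 = m
    omega
  · intro j _
    show (2*j+1) / 2 = j
    omega
  · intro m hm
    simp only [Finset.mem_filter, Finset.mem_Icc] at hm
    obtain ⟨⟨h1, h2⟩, k, hk⟩ := hm
    have hm2 : m / 2 = k := by omega
    have hsin : Real.sin ((m:ℝ) * (π/2)) = (-1:ℝ)^k := by
      have : ((m:ℝ)) * (π/2) = (k:ℝ) * π + π/2 := by
        rw [hk]; push_cast; ring
      rw [this, Real.sin_add_pi_div_two]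
      have := Real.cos_nat_mul_pi_sub 0 k
      simpa using this
    show alpha1 n m * (2 * Real.sin ((m:ℝ) * (π/2))) = 2 * ((-1:ℝ)^(m/2) * alpha1 n (2*(m/2)+1))
    rw [hm2, hsin, show 2*k+1 = m by omega]
    ring


end CDS

/-- with `h = π/2`, the central-difference approximation to the derivative
of `sin` at `0` converges to the exact value `1` as `n → ∞`; equivalently,
`(2/π) ∑_{0 ≤ j, 2j+1 ≤ n} (-1)^j α_{2j+1}^{(1)}(n) → 1`. -/
theorem central_diff_sin_tendsto :
    Filter.Tendsto
      (fun n : ℕ => (1 / (2 * (Real.pi / 2))) *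
        ∑ m ∈ Finset.Icc 1 n,
          alpha1 n m *
            (Real.sin ((m : ℝ) * (Real.pi / 2)) - Real.sin (-((m : ℝ) * (Real.pi / 2)))))
      Filter.atTop (nhds 1) ∧
    Filter.Tendsto
      (fun n : ℕ => (2 / Real.pi) *
        ∑ j ∈ (Finset.range (n + 1)).filter (fun j => 2 * j + 1 ≤ n),
          (-1 : ℝ) ^ j * alpha1 n (2 * j + 1))
      Filter.atTop (nhds 1) := by
  have key : Tendsto (fun n : ℕ => (2 / Real.pi) * ∑ j ∈ range (n+1), (-1:ℝ)^j * cdsb n j)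
      atTop (nhds 1) := by
    have h := cds_T_tendsto.const_mul (2 / Real.pi)
    have hπ : (2 / Real.pi) * (π/2) = 1 := by
      field_simp
    rwa [hπ] at h
  have h2 : Tendsto
      (fun n : ℕ => (2 / Real.pi) *
        ∑ j ∈ (Finset.range (n + 1)).filter (fun j => 2 * j + 1 ≤ n),
          (-1 : ℝ) ^ j * alpha1 n (2 * j + 1)) atTop (nhds 1) := by
    apply key.congr
    intro n
    rw [cds_filter_sum]
  refine ⟨?_, h2⟩
  apply h2.congr
  intro n
  rw [cds_sum_odd]
  have hπ : Real.pi ≠ 0 := Real.pi_ne_zero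
  field_simp
end

section
/- Let n ≥ 1 be an integer and define g₂ : ℝ → ℝ by g₂(θ) = ∑_{m=1}^{n} α_m^{(2)}(n) · (2cos(mθ) − 2). Then the function g₂(θ) + θ² vanishes at θ = 0 together with all of its derivatives up to order 2n+1; equivalently, g₂(θ) = −θ² + O(θ^{2n+2}) as θ → 0. -/
open Finset Real

/-- `α_m^{(2)}(n) = 1 / (m² · π_m(n))`. -/
noncomputable def alpha2 (n m : ℕ) : ℝ := 1 / ((m : ℝ) ^ 2 * pim n m)

open Polynomial in
lemma key_identity (n i : ℕ) (hi1 : 1 ≤ i) (hin : i ≤ n) :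
    ∑ m ∈ Finset.Icc 1 n, alpha2 n m * (m : ℝ) ^ (2 * i) = if i = 1 then 1 else 0 := by
  classical
  set v : ℕ → ℝ := fun m => (m : ℝ) ^ 2 with hv
  have hinj : Set.InjOn v (Finset.Icc 1 n) := by
    intro a ha b hb hab
    have : ((a ^ 2 : ℕ) : ℝ) = ((b ^ 2 : ℕ) : ℝ) := by push_cast; exact hab
    exact Nat.pow_left_injective (by norm_num) (Nat.cast_inj.mp this)
  have hcard : #(Finset.Icc 1 n) = n := by simp
  have hdeg : (X ^ (i - 1) : ℝ[X]).degree < #(Finset.Icc 1 n) := by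
    rw [hcard, Polynomial.degree_X_pow]
    exact_mod_cast Nat.lt_of_lt_of_le (Nat.sub_lt_of_pos_le (by norm_num) hi1) hin
  have hL := Lagrange.eq_interpolate (v := v) hinj hdeg
  have hEval := congrArg (Polynomial.eval (0 : ℝ)) hL
  rw [Lagrange.interpolate_apply, Polynomial.eval_finset_sum] at hEval
  simp only [Polynomial.eval_mul, Polynomial.eval_C, Polynomial.eval_pow,
    Polynomial.eval_X] at hEval
  have h0 : (0 : ℝ) ^ (i - 1) = if i = 1 then 1 else 0 := by
    rcases eq_or_ne i 1 with h | h
    · simp [h]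
    · rw [zero_pow (by omega), if_neg h]
  rw [h0] at hEval
  rw [hEval]
  refine Finset.sum_congr rfl fun m hm => ?_
  simp only [Finset.mem_Icc] at hm
  have hm0 : (m : ℝ) ≠ 0 := Nat.cast_ne_zero.mpr (by omega)
  have hbasis : Polynomial.eval 0 (Lagrange.basis (Finset.Icc 1 n) v m)
      = ∏ k ∈ (Finset.Icc 1 n).erase m, (((m : ℝ) ^ 2 - (k : ℝ) ^ 2)⁻¹ * (-(k : ℝ) ^ 2)) := by
    rw [Lagrange.basis, Polynomial.eval_prod]
    exact Finset.prod_congr rfl fun k hk => by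
      simp [Lagrange.basisDivisor, hv]
  rw [hbasis]
  have hprod : ∏ k ∈ (Finset.Icc 1 n).erase m, (((m : ℝ) ^ 2 - (k : ℝ) ^ 2)⁻¹ * (-(k : ℝ) ^ 2))
      = (pim n m)⁻¹ := by
    rw [pim, ← Finset.prod_inv_distrib]
    refine Finset.prod_congr rfl fun k hk => ?_
    have hk' := Finset.mem_erase.mp hk
    have hkIcc := Finset.mem_Icc.mp hk'.2
    have hk0 : (k : ℝ) ≠ 0 := Nat.cast_ne_zero.mpr (by omega)
    have hrw : (1 : ℝ) - (m : ℝ) ^ 2 / (k : ℝ) ^ 2 = ((k : ℝ) ^ 2 - (m : ℝ) ^ 2) / (k : ℝ) ^ 2 := by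
      field_simp
    rw [hrw, inv_div, show ((m : ℝ) ^ 2 - (k : ℝ) ^ 2) = -((k : ℝ) ^ 2 - (m : ℝ) ^ 2) by ring,
      inv_neg, div_eq_mul_inv]
    ring
  rw [hprod, alpha2, hv]
  have h2i : (m : ℝ) ^ (2 * i) = ((m : ℝ) ^ 2) ^ (i - 1) * (m : ℝ) ^ 2 := by
    rw [← pow_mul, ← pow_add]
    congr 1
    omega
  rw [h2i]
  field_simp

lemma iteratedDeriv_cos_eq (j : ℕ) :
    iteratedDeriv j Real.cos = fun x => Real.cos (x + j * (π / 2)) := by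
  induction j with
  | zero => simp
  | succ j ih =>
    rw [iteratedDeriv_succ, ih]
    funext x
    have : deriv (fun x => Real.cos (x + j * (π / 2))) x = -Real.sin (x + j * (π / 2)) := by
      rw [deriv_comp_add_const (f := Real.cos) (a := (j : ℝ) * (π / 2))]
      exact Real.deriv_cos
    rw [this, ← Real.cos_add_pi_div_two]
    push_cast
    ring_nf

lemma iteratedDeriv_fun_sum' {ι : Type*} (s : Finset ι) (f : ι → ℝ → ℝ) (j : ℕ) (x : ℝ)
    (h : ∀ m ∈ s, ContDiff ℝ j (f m)) :
    iteratedDeriv j (fun θ => ∑ m ∈ s, f m θ) x = ∑ m ∈ s, iteratedDeriv j (f m) x := by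
  simp_rw [iteratedDeriv_eq_iteratedFDeriv]
  rw [iteratedFDeriv_sum h]
  simp

lemma iteratedDeriv_fun_add' (f g : ℝ → ℝ) (j : ℕ) (x : ℝ)
    (hf : ContDiff ℝ j f) (hg : ContDiff ℝ j g) :
    iteratedDeriv j (fun θ => f θ + g θ) x = iteratedDeriv j f x + iteratedDeriv j g x := by
  simp_rw [iteratedDeriv_eq_iteratedFDeriv]
  rw [show (fun θ => f θ + g θ) = f + g from rfl, iteratedFDeriv_add_apply hf.contDiffAt hg.contDiffAt]
  simp

lemma iteratedDeriv_fun_const_mul (c : ℝ) (g : ℝ → ℝ) (j : ℕ) (x : ℝ) (hg : ContDiff ℝ j g) :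
    iteratedDeriv j (fun θ => c * g θ) x = c * iteratedDeriv j g x := by
  simp_rw [← iteratedDerivWithin_univ]
  exact iteratedDerivWithin_const_mul (Set.mem_univ x) uniqueDiffOn_univ c hg.contDiffWithinAt

lemma iteratedDeriv_cos_mul (m : ℕ) (j : ℕ) :
    iteratedDeriv j (fun θ : ℝ => Real.cos ((m : ℝ) * θ)) 0
      = (m : ℝ) ^ j * Real.cos (j * (π / 2)) := by
  rw [iteratedDeriv_comp_const_mul (Real.contDiff_cos.of_le le_top) (m : ℝ)]
  rw [iteratedDeriv_cos_eq]
  simp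

lemma poly_part (c : ℝ) (j : ℕ) (hj : 1 ≤ j) :
    iteratedDeriv j (fun θ : ℝ => θ ^ 2 + c) 0 = if j = 2 then 2 else 0 := by
  have d1 : deriv (fun θ : ℝ => θ ^ 2 + c) = fun θ => 2 * θ := by
    funext θ
    rw [deriv_add_const]
    simp [deriv_pow]
  have d2 : deriv (fun θ : ℝ => 2 * θ) = fun _ : ℝ => (2 : ℝ) := by
    funext θ
    rw [deriv_const_mul _ differentiableAt_fun_id]
    simp
  match j, hj with
  | 1, _ => rw [iteratedDeriv_one, d1]; norm_num
  | 2, _ => rw [iteratedDeriv_succ', d1, iteratedDeriv_one, d2]; norm_num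
  | (k+3), _ =>
    rw [iteratedDeriv_succ', d1, iteratedDeriv_succ', d2, if_neg (by omega)]
    have d3 : deriv (fun _ : ℝ => (2 : ℝ)) = fun _ : ℝ => (0 : ℝ) := by
      funext θ; simp
    rw [iteratedDeriv_succ', d3]
    have : iteratedDeriv k (fun _ : ℝ => (0 : ℝ)) = fun _ => 0 := by
      funext x
      rw [iteratedDeriv_eq_iteratedFDeriv, iteratedFDeriv_zero_fun]
      simp
    rw [this]

/-- for `n ≥ 1` and `g₂(θ) = ∑_{m=1}^{n} α_m^{(2)}(n) (2cos(mθ) - 2)`,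
the function `g₂(θ) + θ²` vanishes at `θ = 0` together with all of its derivatives
up to order `2n + 1`. -/
theorem symbol_second_deriv_accuracy (n : ℕ) (hn : 1 ≤ n) :
    ∀ j : ℕ, j ≤ 2 * n + 1 →
      iteratedDeriv j
        (fun θ : ℝ =>
          (∑ m ∈ Finset.Icc 1 n, alpha2 n m * (2 * Real.cos ((m : ℝ) * θ) - 2)) + θ ^ 2)
        0 = 0 := by
  intro j hj
  rcases Nat.eq_zero_or_pos j with rfl | hj1
  · rw [iteratedDeriv_zero]
    simp
  -- rewrite the function as a sum of cosines plus a polynomial part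
  set C : ℝ := ∑ m ∈ Finset.Icc 1 n, (-2) * alpha2 n m with hC
  have hfun : (fun θ : ℝ =>
        (∑ m ∈ Finset.Icc 1 n, alpha2 n m * (2 * Real.cos ((m : ℝ) * θ) - 2)) + θ ^ 2)
      = fun θ : ℝ => (∑ m ∈ Finset.Icc 1 n, (2 * alpha2 n m) * Real.cos ((m : ℝ) * θ))
          + (θ ^ 2 + C) := by
    funext θ
    have : ∑ m ∈ Finset.Icc 1 n, alpha2 n m * (2 * Real.cos ((m : ℝ) * θ) - 2)
        = ∑ m ∈ Finset.Icc 1 n,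
            ((2 * alpha2 n m) * Real.cos ((m : ℝ) * θ) + (-2) * alpha2 n m) :=
      Finset.sum_congr rfl fun m _ => by ring
    rw [this, Finset.sum_add_distrib, hC]
    ring
  have hsmooth : ∀ m ∈ Finset.Icc 1 n,
      ContDiff ℝ j (fun θ : ℝ => (2 * alpha2 n m) * Real.cos ((m : ℝ) * θ)) := by
    intro m _
    exact (contDiff_const.mul
      ((Real.contDiff_cos.of_le le_top).comp (contDiff_const.mul contDiff_id)))
  have hP : ContDiff ℝ j (fun θ : ℝ => θ ^ 2 + C) :=
    (contDiff_id.pow 2).add contDiff_const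
  rw [hfun, iteratedDeriv_fun_add' _ _ j 0 (ContDiff.sum hsmooth) hP,
    iteratedDeriv_fun_sum' _ _ j 0 hsmooth, poly_part C j hj1]
  have hterm : ∀ m ∈ Finset.Icc 1 n,
      iteratedDeriv j (fun θ : ℝ => (2 * alpha2 n m) * Real.cos ((m : ℝ) * θ)) 0
        = (2 * alpha2 n m) * ((m : ℝ) ^ j * Real.cos (j * (π / 2))) := by
    intro m _
    have hg : ContDiff ℝ j (fun θ : ℝ => Real.cos ((m : ℝ) * θ)) :=
      (Real.contDiff_cos.of_le le_top).comp (contDiff_const.mul contDiff_id)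
    rw [iteratedDeriv_fun_const_mul (2 * alpha2 n m) _ j 0 hg, iteratedDeriv_cos_mul]
  rw [Finset.sum_congr rfl hterm]
  rcases Nat.even_or_odd j with ⟨i, hi⟩ | ⟨i, hi⟩
  · -- even case: j = 2 * i, 1 ≤ i ≤ n
    have hji : j = 2 * i := by omega
    have hi1 : 1 ≤ i := by omega
    have hin : i ≤ n := by omega
    have hcos : Real.cos (j * (π / 2)) = (-1) ^ i := by
      have harg : (j : ℝ) * (π / 2) = (i : ℝ) * π := by rw [hji]; push_cast; ring
      have := Real.cos_nat_mul_pi_sub 0 i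
      simp only [sub_zero, Real.cos_zero, mul_one] at this
      rw [harg, this]
    rw [hcos]
    have hsum : ∑ m ∈ Finset.Icc 1 n, (2 * alpha2 n m) * ((m : ℝ) ^ j * (-1) ^ i)
        = (2 * (-1 : ℝ) ^ i) * ∑ m ∈ Finset.Icc 1 n, alpha2 n m * (m : ℝ) ^ (2 * i) := by
      rw [Finset.mul_sum]
      exact Finset.sum_congr rfl fun m _ => by rw [hji]; ring
    rw [hsum, key_identity n i hi1 hin]
    rcases eq_or_ne i 1 with h1 | h1
    · rw [if_pos h1, if_pos (by omega)]
      subst h1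
      norm_num
    · rw [if_neg h1, if_neg (by omega)]
      ring
  · -- odd case
    have hcos : Real.cos (j * (π / 2)) = 0 := by
      have harg : (j : ℝ) * (π / 2) = (i : ℝ) * π + π / 2 := by
        rw [show (j : ℝ) = 2 * i + 1 by exact_mod_cast congrArg Nat.cast hi]
        ring
      rw [harg, Real.cos_add_pi_div_two, Real.sin_nat_mul_pi, neg_zero]
    rw [hcos, if_neg (by omega)]
    simp
end
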